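/- arXiv:1206.1250 — 7 statements merged into one kernel-verified Lean document; each statement's English description precedes it below -/
import Mathlib

section
/- Let O be a discrete valuation ring with uniformizer ϖ, let s ≥ 1 be an integer, let R = O/ϖ^s O, and let Γ be a finite group. If V is a finitely generated R[Γ]-module which has finite injective dimension as an R[Γ]-module (i.e. V admits a finite exact resolution 0 → V → I_0 → I_1 → ... → I_n → 0 with each I_j an injective R[Γ]-module), then V is an injective R[Γ]-module. -/
/-!
Write `A = R[Γ]` with `R = O/ϖ^s`. Every finitely generated `A`-module `M` embeds into a free
module `Aᵐ`: by the structure theorem over the PID `O`, `M` is a sum of cyclic modules `O/(q)` with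
`q ∣ ϖ^s`, each of which embeds into `R`, and an `R`-linear functional `φ` on `M` is the coefficient
at `1` of the `A`-linear map `x ↦ ∑ γ, φ (γ⁻¹ x) γ`.

Given the resolution `0 → V → I₀ → ⋯ → Iₙ → 0`, descending induction on `j` shows that every map
from a finitely generated module `M` into the image of `dⱼ` lifts to `Iⱼ`: embed `M` into a free
module `F`, extend the map to `F → Iⱼ₊₁` by injectivity, correct it by the inductive hypothesis
applied to the finitely generated cokernel `F/M` so that it lands in `ker dⱼ₊₁ = im dⱼ`, and lift
along `Iⱼ → im dⱼ` by projectivity of `F`. The same correction, applied to a map from an ideal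
`J ⊆ A` into `I₀`, gives Baer's criterion for `V`.
-/

open LinearMap

universe u w

section FiniteLifting

variable {A : Type u} [Ring A]

def FGModulesEmbedInFree (A : Type u) [Ring A] : Prop :=
  ∀ (M : Type u) [AddCommGroup M] [Module A M] [Module.Finite A M],
    ∃ (m : ℕ) (φ : M →ₗ[A] Fin m → A), Function.Injective φ

def LiftsFromFinite {X Y : Type*} [AddCommGroup X] [AddCommGroup Y] [Module A X] [Module A Y]
    (p : X →ₗ[A] Y) : Prop :=
  ∀ (M : Type u) [AddCommGroup M] [Module A M] [Module.Finite A M] (f : M →ₗ[A] Y),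
    range f ≤ range p → ∃ g : M →ₗ[A] X, p ∘ₗ g = f

variable {X Y Z : Type*} [AddCommGroup X] [AddCommGroup Y] [AddCommGroup Z]
  [Module A X] [Module A Y] [Module A Z]

theorem liftsFromFinite_of_subsingleton [Subsingleton Y] (p : X →ₗ[A] Y) : LiftsFromFinite p :=
  fun _ _ _ _ _ _ ↦ ⟨0, Subsingleton.elim _ _⟩

theorem Function.Exact.exists_comp_eq_of_injective {f : X →ₗ[A] Y} {g : Y →ₗ[A] Z}
    (hfg : Function.Exact f g) (hf : Function.Injective f) {P : Type*} [AddCommGroup P]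
    [Module A P] (h : P →ₗ[A] Y) (hh : g ∘ₗ h = 0) : ∃ h' : P →ₗ[A] X, f ∘ₗ h' = h := by
  have hmem (x : P) : h x ∈ range f := hfg.linearMap_ker_eq ▸ congr($hh x)
  refine ⟨(LinearEquiv.ofInjective f hf).symm.toLinearMap ∘ₗ h.codRestrict _ hmem, ?_⟩
  ext x
  simp

theorem Function.Exact.exists_comp_eq_of_projective {f : X →ₗ[A] Y} {g : Y →ₗ[A] Z}
    (hfg : Function.Exact f g) {P : Type*} [AddCommGroup P] [Module A P] [Module.Projective A P]
    (h : P →ₗ[A] Y) (hh : g ∘ₗ h = 0) : ∃ h' : P →ₗ[A] X, f ∘ₗ h' = h := by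
  have hmem (x : P) : h x ∈ range f := hfg.linearMap_ker_eq ▸ congr($hh x)
  obtain ⟨h', hh'⟩ := Module.projective_lifting_property f.rangeRestrict (h.codRestrict _ hmem)
    f.surjective_rangeRestrict
  exact ⟨h', by ext x; exact congr(Subtype.val ($hh' x))⟩

theorem LiftsFromFinite.exists_extension_comp_eq_zero {q : Y →ₗ[A] Z} (hq : LiftsFromFinite q)
    (hY : Module.Baer A Y) {M : Type*} {N : Type u} [AddCommGroup M] [AddCommGroup N]
    [Module A M] [Module A N] [Module.Finite A N] (a : M →ₗ[A] N) (ha : Function.Injective a)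
    (g : M →ₗ[A] Y) (hg : q ∘ₗ g = 0) : ∃ h : N →ₗ[A] Y, h ∘ₗ a = g ∧ q ∘ₗ h = 0 := by
  obtain ⟨u, hu⟩ := hY.extension_property a ha g
  have hker : range a ≤ ker (q ∘ₗ u) := by
    rintro _ ⟨x, rfl⟩
    rw [mem_ker, ← LinearMap.comp_apply, LinearMap.comp_assoc, hu, hg, LinearMap.zero_apply]
  obtain ⟨w, hw⟩ := hq _ ((range a).liftQ _ hker)
    (by rw [Submodule.range_liftQ]; exact range_comp_le_range _ _)
  refine ⟨u - w ∘ₗ (range a).mkQ, ?_, ?_⟩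
  · rw [sub_comp, hu, LinearMap.comp_assoc, range_mkQ_comp, comp_zero, sub_zero]
  · rw [comp_sub, ← LinearMap.comp_assoc, hw, Submodule.liftQ_mkQ, sub_self]

theorem LiftsFromFinite.of_exact (hA : FGModulesEmbedInFree A) {p : X →ₗ[A] Y}
    {q : Y →ₗ[A] Z} (hpq : Function.Exact p q) (hY : Module.Baer A Y) (hq : LiftsFromFinite q) :
    LiftsFromFinite p := by
  intro M _ _ _ f hf
  obtain ⟨m, a, ha⟩ := hA M
  have hqf : q ∘ₗ f = 0 := by
    ext x
    exact (hpq.linearMap_ker_eq.ge (hf ⟨x, rfl⟩) :)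
  obtain ⟨h, rfl, hqh⟩ := hq.exists_extension_comp_eq_zero hY a ha f hqf
  obtain ⟨T, rfl⟩ := hpq.exists_comp_eq_of_projective h hqh
  exact ⟨T ∘ₗ a, rfl⟩

theorem LiftsFromFinite.baer_of_exact {f : X →ₗ[A] Y} {p : Y →ₗ[A] Z}
    (hf : Function.Injective f) (hfp : Function.Exact f p) (hY : Module.Baer A Y)
    (hp : LiftsFromFinite p) : Module.Baer A X := by
  intro J g
  obtain ⟨h, hh, hph⟩ := hp.exists_extension_comp_eq_zero hY J.subtype J.injective_subtype
    (f ∘ₗ g) (by rw [← LinearMap.comp_assoc, hfp.linearMap_comp_eq_zero, zero_comp])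
  obtain ⟨h', rfl⟩ := hfp.exists_comp_eq_of_injective hf h hph
  exact ⟨h', fun x hx ↦ hf congr($hh ⟨x, hx⟩)⟩

theorem liftsFromFinite_of_resolution (hA : FGModulesEmbedInFree A) {n : ℕ} {I : ℕ → Type*}
    [∀ j, AddCommGroup (I j)] [∀ j, Module A (I j)] (d : ∀ j, I j →ₗ[A] I (j + 1))
    [Subsingleton (I (n + 1))] (hI : ∀ j ≤ n, Module.Baer A (I j))
    (hd : ∀ j < n, Function.Exact (d j) (d (j + 1))) {j : ℕ} (hj : j ≤ n) :
    LiftsFromFinite (d j) := by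
  induction hj using Nat.decreasingInduction with
  | self => exact liftsFromFinite_of_subsingleton _
  | of_succ k hk ih => exact ih.of_exact hA (hd k hk) (hI (k + 1) hk)

end FiniteLifting

section QuotientPID

variable {O : Type*} [CommRing O] [IsDomain O]

theorem exists_injective_quotient_span_singleton_of_dvd {q c : O} (hc : c ≠ 0) (hqc : q ∣ c) :
    ∃ ψ : (O ⧸ Ideal.span {q}) →ₗ[O] O ⧸ Ideal.span {c}, Function.Injective ψ := by
  obtain ⟨b, rfl⟩ := hqc
  have hb : b ≠ 0 := right_ne_zero_of_mul hc
  let g : O →ₗ[O] O ⧸ Ideal.span {q * b} := (Ideal.span {q * b}).mkQ ∘ₗ LinearMap.mulRight O b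
  have hker : Ideal.span {q} = ker g := by
    ext x
    rw [mem_ker, Ideal.mem_span_singleton, ← mul_dvd_mul_iff_right hb,
      ← Ideal.mem_span_singleton]
    exact (Submodule.Quotient.mk_eq_zero _).symm
  exact ⟨(Ideal.span {q}).liftQ g hker.le, ker_eq_bot.mp (Submodule.ker_liftQ_eq_bot' _ g hker)⟩

variable [IsPrincipalIdealRing O]

theorem exists_injective_pi_quotient_of_smul_eq_zero {N : Type*} [AddCommGroup N] [Module O N]
    [Module.Finite O N] {c : O} (hc : c ≠ 0) (hN : ∀ x : N, c • x = 0) :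
    ∃ (m : ℕ) (φ : N →ₗ[O] Fin m → O ⧸ Ideal.span {c}), Function.Injective φ := by
  classical
  obtain ⟨ι, _, p, -, e, ⟨eqv⟩⟩ := Module.equiv_directSum_of_isTorsion (R := O) (M := N)
    fun x ↦ ⟨⟨c, mem_nonZeroDivisors_of_ne_zero hc⟩, hN x⟩
  have hψ (i : ι) : ∃ ψ : (O ⧸ Ideal.span {p i ^ e i}) →ₗ[O] O ⧸ Ideal.span {c},
      Function.Injective ψ := by
    refine exists_injective_quotient_span_singleton_of_dvd hc (Ideal.mem_span_singleton.mp ?_)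
    have h := congr(eqv $(hN (eqv.symm (DirectSum.lof O ι _ i (Submodule.Quotient.mk 1)))))
    rw [map_smul, LinearEquiv.apply_symm_apply, map_zero, ← map_smul,
      ← Submodule.Quotient.mk_smul, smul_eq_mul, mul_one] at h
    exact (Submodule.Quotient.mk_eq_zero _).mp (DirectSum.of_injective i (h.trans (map_zero _).symm))
  choose ψ hψ using hψ
  let φ : N →ₗ[O] ι → O ⧸ Ideal.span {c} :=
    LinearMap.pi fun i ↦ ψ i ∘ₗ DFinsupp.lapply i ∘ₗ eqv.toLinearMap
  have hφ : Function.Injective φ := fun x y hxy ↦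
    eqv.injective (DFinsupp.ext fun i ↦ hψ i (congr_fun hxy i))
  let e := LinearEquiv.funCongrLeft O (O ⧸ Ideal.span {c}) (Fintype.equivFin ι).symm
  exact ⟨_, e.toLinearMap ∘ₗ φ, e.injective.comp hφ⟩

theorem exists_injective_pi_quotient_span_singleton {c : O} (hc : c ≠ 0)
    {N : Type*} [AddCommGroup N] [Module (O ⧸ Ideal.span {c}) N]
    [Module.Finite (O ⧸ Ideal.span {c}) N] :
    ∃ (m : ℕ) (φ : N →ₗ[O ⧸ Ideal.span {c}] Fin m → O ⧸ Ideal.span {c}),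
      Function.Injective φ := by
  let _ : Module O N := Module.compHom N (algebraMap O (O ⧸ Ideal.span {c}))
  have : IsScalarTower O (O ⧸ Ideal.span {c}) N := IsScalarTower.of_algebraMap_smul fun _ _ ↦ rfl
  have : Module.Finite O N := Module.Finite.trans (O ⧸ Ideal.span {c}) N
  have hN (x : N) : c • x = 0 := by
    change algebraMap O (O ⧸ Ideal.span {c}) c • x = 0
    rw [Ideal.Quotient.algebraMap_eq,
      Ideal.Quotient.eq_zero_iff_mem.mpr (Ideal.mem_span_singleton_self c), zero_smul]
  obtain ⟨m, φ, hφ⟩ := exists_injective_pi_quotient_of_smul_eq_zero hc hN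
  exact ⟨m, φ.extendScalarsOfSurjective Ideal.Quotient.mk_surjective, hφ⟩

end QuotientPID

theorem exists_linearMap_monoidAlgebra_coeff_one {k G M : Type*} [CommRing k] [Group G]
    [Finite G] [AddCommGroup M] [Module k M] [Module (MonoidAlgebra k G) M]
    [IsScalarTower k (MonoidAlgebra k G) M] (φ : M →ₗ[k] k) :
    ∃ Φ : M →ₗ[MonoidAlgebra k G] MonoidAlgebra k G, ∀ x, (Φ x).coeff 1 = φ x := by
  classical
  have := Fintype.ofFinite G
  let F : M →ₗ[k] MonoidAlgebra k G :=
    ∑ γ : G, MonoidAlgebra.lsingle γ ∘ₗ φ ∘ₗ MonoidAlgebra.GroupSMul.linearMap k M γ⁻¹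
  refine ⟨MonoidAlgebra.equivariantOfLinearOfComm F fun g x ↦ ?_, fun x ↦ ?_⟩
  · simp only [F, LinearMap.sum_apply, LinearMap.comp_apply,
      MonoidAlgebra.GroupSMul.linearMap_apply, MonoidAlgebra.lsingle_apply, smul_eq_mul,
      Finset.mul_sum, MonoidAlgebra.single_mul_single, one_mul, smul_smul]
    refine (Fintype.sum_equiv (Equiv.mulLeft g) _ _ fun γ ↦ ?_).symm
    simp [mul_inv_rev]
  · simp only [MonoidAlgebra.equivariantOfLinearOfComm_apply, F, LinearMap.sum_apply,
      LinearMap.comp_apply, MonoidAlgebra.GroupSMul.linearMap_apply, MonoidAlgebra.lsingle_apply,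
      MonoidAlgebra.coeff_sum, MonoidAlgebra.coeff_single, Finsupp.finsetSum_apply,
      Finsupp.single_apply, Finset.sum_ite_eq', Finset.mem_univ, if_true, inv_one]
    rw [← MonoidAlgebra.one_def, one_smul]

theorem fgModulesEmbedInFree_monoidAlgebra {O : Type*} [CommRing O] [IsDomain O]
    [IsPrincipalIdealRing O] {c : O} (hc : c ≠ 0) (Γ : Type*) [Group Γ] [Finite Γ] :
    FGModulesEmbedInFree (MonoidAlgebra (O ⧸ Ideal.span {c}) Γ) := by
  intro M _ _ _
  let _ : Module (O ⧸ Ideal.span {c}) M :=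
    Module.compHom M (algebraMap (O ⧸ Ideal.span {c}) (MonoidAlgebra (O ⧸ Ideal.span {c}) Γ))
  have : IsScalarTower (O ⧸ Ideal.span {c}) (MonoidAlgebra (O ⧸ Ideal.span {c}) Γ) M :=
    IsScalarTower.of_algebraMap_smul fun _ _ ↦ rfl
  have : Module.Finite (O ⧸ Ideal.span {c}) M :=
    Module.Finite.trans (MonoidAlgebra (O ⧸ Ideal.span {c}) Γ) M
  obtain ⟨m, φ, hφ⟩ := exists_injective_pi_quotient_span_singleton hc (N := M)
  choose Φ hΦ using fun j ↦
    exists_linearMap_monoidAlgebra_coeff_one (G := Γ) (LinearMap.proj j ∘ₗ φ)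
  refine ⟨m, LinearMap.pi Φ, fun x y hxy ↦ hφ (funext fun j ↦ ?_)⟩
  simpa [hΦ] using congr(($hxy j).coeff 1)

section Small

variable {O : Type*} [CommRing O]

theorem small_quotient_span_pow_add (π : O) (a b : ℕ) [Small.{w} (O ⧸ Ideal.span {π ^ a})]
    [Small.{w} (O ⧸ Ideal.span {π ^ b})] : Small.{w} (O ⧸ Ideal.span {π ^ (a + b)}) := by
  refine small_of_surjective (f := fun uv : (O ⧸ Ideal.span {π ^ a}) × (O ⧸ Ideal.span {π ^ b}) ↦
    Ideal.Quotient.mk _ (uv.1.out + π ^ a * uv.2.out)) fun y ↦ ?_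
  obtain ⟨x, rfl⟩ := Ideal.Quotient.mk_surjective y
  obtain ⟨z, hz⟩ := Ideal.mem_span_singleton'.mp <|
    Ideal.Quotient.eq.mp (Ideal.Quotient.mk_out (Ideal.Quotient.mk (Ideal.span {π ^ a}) x))
  obtain ⟨t, ht⟩ := Ideal.mem_span_singleton'.mp <|
    Ideal.Quotient.eq.mp (Ideal.Quotient.mk_out (Ideal.Quotient.mk (Ideal.span {π ^ b}) (-z)))
  refine ⟨(Ideal.Quotient.mk _ x, Ideal.Quotient.mk _ (-z)),
    Ideal.Quotient.eq.mpr (Ideal.mem_span_singleton'.mpr ⟨t, ?_⟩)⟩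
  linear_combination hz + π ^ a * ht

theorem small_quotient_span_pow (π : O) [Small.{w} (O ⧸ Ideal.span {π})] :
    ∀ n : ℕ, Small.{w} (O ⧸ Ideal.span {π ^ n})
  | 0 => by
    have : Subsingleton (O ⧸ Ideal.span {π ^ 0}) := by
      rw [pow_zero, Ideal.span_singleton_one]
      infer_instance
    infer_instance
  | n + 1 => by
    have := small_quotient_span_pow π n
    have : Small.{w} (O ⧸ Ideal.span {π ^ 1}) := by rwa [pow_one]
    exact small_quotient_span_pow_add π n 1

theorem small_quotient_of_le_torsionOf {M : Type w} [AddCommGroup M] [Module O M]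
    {𝔪 : Ideal O} [𝔪.IsMaximal] {y : M} (hy : y ≠ 0) (h𝔪 : 𝔪 ≤ Ideal.torsionOf O M y) :
    Small.{w} (O ⧸ 𝔪) := by
  have ht : 𝔪 = Ideal.torsionOf O M y :=
    Ideal.IsMaximal.eq_of_le ‹_› ((Ideal.torsionOf_eq_top_iff (R := O) y).not.mpr hy) h𝔪
  rw [ht]
  exact small_map (Ideal.quotTorsionOfEquivSpanSingleton O M y).toEquiv

theorem exists_ne_zero_smul_eq_zero_of_pow_smul_eq_zero {M : Type*} [AddCommGroup M]
    [Module O M] (π : O) {x : M} (hx : x ≠ 0) {n : ℕ} (hn : π ^ n • x = 0) :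
    ∃ y : M, y ≠ 0 ∧ π • y = 0 := by
  induction n with
  | zero => exact absurd (by simpa using hn) hx
  | succ n ih =>
    by_cases h : π ^ n • x = 0
    · exact ih h
    · exact ⟨π ^ n • x, h, by rwa [smul_smul, ← pow_succ']⟩

variable [IsPrincipalIdealRing O]

theorem small_quotient_span_pow_of_smul_eq_zero {ϖ : O} (hϖ : Irreducible ϖ) {M : Type w}
    [AddCommGroup M] [Module O M] {n : ℕ} {x : M} (hx : x ≠ 0) (hn : ϖ ^ n • x = 0) :
    Small.{w} (O ⧸ Ideal.span {ϖ ^ n}) := by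
  obtain ⟨y, hy, hϖy⟩ := exists_ne_zero_smul_eq_zero_of_pow_smul_eq_zero ϖ hx hn
  have := PrincipalIdealRing.isMaximal_of_irreducible hϖ
  have := small_quotient_of_le_torsionOf hy (𝔪 := Ideal.span {ϖ})
    (by rwa [Ideal.span_le, Set.singleton_subset_iff, SetLike.mem_coe, Ideal.mem_torsionOf_iff])
  exact small_quotient_span_pow ϖ n

theorem small_monoidAlgebra_of_ne_zero {ϖ : O} (hϖ : Irreducible ϖ) (s : ℕ) (Γ : Type*)
    [Monoid Γ] [Finite Γ] {M : Type w} [AddCommGroup M]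
    [Module (MonoidAlgebra (O ⧸ Ideal.span {ϖ ^ s}) Γ) M] {x : M} (hx : x ≠ 0) :
    Small.{w} (MonoidAlgebra (O ⧸ Ideal.span {ϖ ^ s}) Γ) := by
  let _ : Module O M :=
    Module.compHom M (algebraMap O (MonoidAlgebra (O ⧸ Ideal.span {ϖ ^ s}) Γ))
  have hx' : ϖ ^ s • x = 0 := by
    change algebraMap O (MonoidAlgebra (O ⧸ Ideal.span {ϖ ^ s}) Γ) (ϖ ^ s) • x = 0
    rw [IsScalarTower.algebraMap_apply O (O ⧸ Ideal.span {ϖ ^ s}), Ideal.Quotient.algebraMap_eq,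
      Ideal.Quotient.eq_zero_iff_mem.mpr (Ideal.mem_span_singleton_self _), map_zero, zero_smul]
  have := small_quotient_span_pow_of_smul_eq_zero hϖ hx hx'
  exact Module.Finite.small (O ⧸ Ideal.span {ϖ ^ s}) _

end Small

theorem stmt0_general (O : Type*) [CommRing O] [IsDomain O] [IsDiscreteValuationRing O]
    (ϖ : O) (hϖ : Irreducible ϖ) (s : ℕ)
    (Γ : Type*) [Group Γ] [Finite Γ]
    (V : Type*) [AddCommGroup V]
    [Module (MonoidAlgebra (O ⧸ Ideal.span {ϖ ^ s}) Γ) V]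
    (n : ℕ) (I : ℕ → Type*) [∀ j, AddCommGroup (I j)]
    [∀ j, Module (MonoidAlgebra (O ⧸ Ideal.span {ϖ ^ s}) Γ) (I j)]
    (f₀ : V →ₗ[MonoidAlgebra (O ⧸ Ideal.span {ϖ ^ s}) Γ] I 0)
    (d : ∀ j, I j →ₗ[MonoidAlgebra (O ⧸ Ideal.span {ϖ ^ s}) Γ] I (j + 1))
    (htriv : ∀ j, n < j → Subsingleton (I j))
    (hinjmod : ∀ j, j ≤ n → Module.Injective (MonoidAlgebra (O ⧸ Ideal.span {ϖ ^ s}) Γ) (I j))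
    (hf₀ : Function.Injective f₀)
    (hex₀ : Function.Exact f₀ (d 0))
    (hex : ∀ j, j < n → Function.Exact (d j) (d (j + 1))) :
    Module.Injective (MonoidAlgebra (O ⧸ Ideal.span {ϖ ^ s}) Γ) V := by
  rcases subsingleton_or_nontrivial V with hV | hV
  · exact Module.Baer.injective fun _ _ ↦ ⟨0, fun _ _ ↦ Subsingleton.elim _ _⟩
  obtain ⟨v, hv⟩ := exists_ne (0 : V)
  -- Passing from injectivity of the `I j` to Baer's criterion needs the ring to be small in
  -- their universe; `f₀ v` is a nonzero element of `I 0`.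
  have := small_monoidAlgebra_of_ne_zero hϖ s Γ ((map_ne_zero_iff f₀ hf₀).mpr hv)
  have hI (j : ℕ) (hj : j ≤ n) := Module.Baer.of_injective (hinjmod j hj)
  have := htriv (n + 1) n.lt_succ_self
  have hd₀ := liftsFromFinite_of_resolution
    (fgModulesEmbedInFree_monoidAlgebra (pow_ne_zero s hϖ.ne_zero) Γ) d hI hex n.zero_le
  exact (hd₀.baer_of_exact hf₀ hex₀ (hI 0 n.zero_le)).injective

/-- Let `O` be a DVR with uniformizer `ϖ`, `s ≥ 1`, `R = O/ϖ^s O`, and `Γ` a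
finite group.  If `V` is a finitely generated `R[Γ]`-module of finite injective dimension
(i.e. there is a finite exact resolution `0 → V → I 0 → I 1 → ⋯ → I n → 0` with each `I j`
an injective `R[Γ]`-module; here the modules `I j` for `j > n` are zero), then `V` is an
injective `R[Γ]`-module. -/
theorem stmt0 (O : Type*) [CommRing O] [IsDomain O] [IsDiscreteValuationRing O]
    (ϖ : O) (hϖ : Irreducible ϖ) (s : ℕ) (hs : 1 ≤ s)
    (Γ : Type*) [Group Γ] [Finite Γ]
    (V : Type*) [AddCommGroup V]
    [Module (MonoidAlgebra (O ⧸ Ideal.span {ϖ ^ s}) Γ) V]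
    [Module.Finite (MonoidAlgebra (O ⧸ Ideal.span {ϖ ^ s}) Γ) V]
    (n : ℕ) (I : ℕ → Type*) [∀ j, AddCommGroup (I j)]
    [∀ j, Module (MonoidAlgebra (O ⧸ Ideal.span {ϖ ^ s}) Γ) (I j)]
    (f₀ : V →ₗ[MonoidAlgebra (O ⧸ Ideal.span {ϖ ^ s}) Γ] I 0)
    (d : ∀ j, I j →ₗ[MonoidAlgebra (O ⧸ Ideal.span {ϖ ^ s}) Γ] I (j + 1))
    (htriv : ∀ j, n < j → Subsingleton (I j))
    (hinjmod : ∀ j, j ≤ n → Module.Injective (MonoidAlgebra (O ⧸ Ideal.span {ϖ ^ s}) Γ) (I j))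
    (hf₀ : Function.Injective f₀)
    (hex₀ : Function.Exact f₀ (d 0))
    (hex : ∀ j, j < n → Function.Exact (d j) (d (j + 1))) :
    Module.Injective (MonoidAlgebra (O ⧸ Ideal.span {ϖ ^ s}) Γ) V :=
  stmt0_general O ϖ hϖ s Γ V n I f₀ d htriv hinjmod hf₀ hex₀ hex
end

section
/- Let O be a discrete valuation ring with uniformizer ϖ, let s ≥ 1 be an integer, and let R = O/ϖ^s O. For every finitely generated R-module V, the natural evaluation map V → Hom_R(Hom_R(V, R), R), sending v to the map f ↦ f(v), is an isomorphism of R-modules. -/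
/-!
Viewed as an `O`-module, `V` is finitely generated and killed by `ϖ ^ s`, so the structure
theorem over the PID `O` writes it as `⨁ O ⧸ (ϖ ^ kᵢ)` with `kᵢ ≤ s`, that is, as an `R`-module,
`⨁ R ⧸ (ϖ ^ kᵢ)`. Reflexivity is preserved by finite products, and a cyclic module `A ⧸ (a)` is
reflexive as soon as there is a `b` with `ann a = (b)` and `ann b = (a)`: its dual is then
`A • (x ↦ x b)`. In `R` this holds for `a = ϖ ^ k`, `b = ϖ ^ (s - k)`.
-/

open Module

instance Pi.instModuleIsReflexive {R ι : Type*} [CommSemiring R] [Fintype ι]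
    (M : ι → Type*) [∀ i, AddCommMonoid (M i)] [∀ i, Module R (M i)] [∀ i, IsReflexive R (M i)] :
    IsReflexive R (∀ i, M i) where
  bijective_dual_eval' := by
    classical
    let e : Dual R (Dual R (∀ i, M i)) ≃ₗ[R] ∀ i, Dual R (Dual R (M i)) :=
      (LinearMap.lsum R M R).dualMap.trans (LinearMap.lsum R (fun i ↦ Dual R (M i)) R).symm
    have : Dual.eval R (∀ i, M i) =
        e.symm.toLinearMap ∘ₗ LinearMap.pi fun i ↦ Dual.eval R (M i) ∘ₗ LinearMap.proj i := by
      refine LinearMap.ext fun m ↦ LinearMap.ext fun f ↦ ?_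
      simp [e, ← map_sum, Finset.univ_sum_single]
    rw [this, LinearMap.coe_comp, LinearEquiv.coe_coe, EquivLike.comp_bijective]
    exact Function.Bijective.piMap fun i ↦ bijective_dual_eval R (M i)

theorem Module.isReflexive_quotient_span_singleton {A : Type*} [CommRing A] {a b : A}
    (hab : ∀ x, a * x = 0 ↔ b ∣ x) (hba : ∀ x, b * x = 0 ↔ a ∣ x) :
    IsReflexive A (A ⧸ Ideal.span {a}) := by
  have hab0 : a * b = 0 := (hab b).mpr dvd_rfl
  let φ : Dual A (A ⧸ Ideal.span {a}) :=
    (Ideal.span {a}).liftQ (LinearMap.mulRight A b) fun x hx ↦ by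
      obtain ⟨c, rfl⟩ := Ideal.mem_span_singleton'.mp hx
      simp [mul_assoc, hab0]
  have hφ (x : A) : φ (Ideal.Quotient.mk _ x) = x * b := rfl
  have dual_ext : ∀ f g : Dual A (A ⧸ Ideal.span {a}), f 1 = g 1 → f = g := fun f g h ↦
    Submodule.linearMap_qext _ (LinearMap.ext_ring h)
  have dual_eq_smul (f : Dual A (A ⧸ Ideal.span {a})) : ∃ c : A, f = c • φ := by
    obtain ⟨c, hc⟩ := (hab (f 1)).mp <| by
      rw [← smul_eq_mul, ← map_smul, Algebra.smul_def, mul_one, Ideal.Quotient.algebraMap_eq,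
        Ideal.Quotient.eq_zero_iff_mem.mpr (Ideal.mem_span_singleton_self a), map_zero]
    refine ⟨c, dual_ext _ _ ?_⟩
    rw [hc, LinearMap.smul_apply, ← map_one (Ideal.Quotient.mk _), hφ, smul_eq_mul, one_mul,
      mul_comm]
  refine ⟨⟨(injective_iff_map_eq_zero _).mpr fun x hx ↦ ?_, fun Φ ↦ ?_⟩⟩
  · obtain ⟨x, rfl⟩ := Ideal.Quotient.mk_surjective x
    have : x * b = 0 := (hφ x).symm.trans (LinearMap.congr_fun hx φ)
    exact Ideal.Quotient.eq_zero_iff_mem.mpr <|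
      Ideal.mem_span_singleton.mpr ((hba x).mp (by rw [mul_comm, this]))
  · have haφ : a • φ = 0 := dual_ext _ _ (by
      rw [LinearMap.smul_apply, ← map_one (Ideal.Quotient.mk _), hφ, smul_eq_mul, one_mul, hab0,
        LinearMap.zero_apply])
    obtain ⟨c, hc⟩ := (hab (Φ φ)).mp (by rw [← smul_eq_mul, ← map_smul, haφ, map_zero])
    refine ⟨Ideal.Quotient.mk _ c, LinearMap.ext fun f ↦ ?_⟩
    obtain ⟨d, rfl⟩ := dual_eq_smul f
    rw [Dual.eval_apply, LinearMap.smul_apply, hφ, map_smul, hc, mul_comm]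

theorem Ideal.Quotient.mk_mul_eq_zero_iff_dvd {A : Type*} [CommRing A] [IsDomain A] {a b c : A}
    (ha : a ≠ 0) (hc : a * b = c) (x : A ⧸ Ideal.span {c}) :
    Ideal.Quotient.mk _ a * x = 0 ↔ Ideal.Quotient.mk _ b ∣ x := by
  subst hc
  obtain ⟨y, rfl⟩ := Ideal.Quotient.mk_surjective x
  rw [← map_mul, Ideal.Quotient.eq_zero_iff_mem, Ideal.mem_span_singleton,
    mul_dvd_mul_iff_left ha]
  refine ⟨map_dvd _, fun ⟨z, hz⟩ ↦ ?_⟩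
  obtain ⟨w, rfl⟩ := Ideal.Quotient.mk_surjective z
  rw [← map_mul, Ideal.Quotient.eq, Ideal.mem_span_singleton] at hz
  exact (dvd_sub_left (dvd_mul_right b w)).mp (dvd_of_mul_left_dvd hz)

theorem Module.isReflexive_quotient_span_pow {O : Type*} [CommRing O] [IsDomain O] {ϖ : O}
    (hϖ : ϖ ≠ 0) {s k : ℕ} (hk : k ≤ s) :
    IsReflexive (O ⧸ Ideal.span {ϖ ^ s})
      ((O ⧸ Ideal.span {ϖ ^ s}) ⧸ Ideal.span {Ideal.Quotient.mk (Ideal.span {ϖ ^ s}) (ϖ ^ k)}) :=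
  isReflexive_quotient_span_singleton (b := Ideal.Quotient.mk _ (ϖ ^ (s - k)))
    (Ideal.Quotient.mk_mul_eq_zero_iff_dvd (pow_ne_zero _ hϖ)
      (by rw [← pow_add, Nat.add_sub_cancel' hk]))
    (Ideal.Quotient.mk_mul_eq_zero_iff_dvd (pow_ne_zero _ hϖ)
      (by rw [← pow_add, Nat.sub_add_cancel hk]))

noncomputable def Ideal.quotientSpanSingletonEquivQuotQuot {O : Type*} [CommRing O] {I : Ideal O}
    {x : O} (h : I ≤ Ideal.span {x}) :
    (O ⧸ Ideal.span {x}) ≃ₗ[O] (O ⧸ I) ⧸ Ideal.span {Ideal.Quotient.mk I x} :=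
  ((Ideal.quotientEquivAlgOfEq O (by rw [Ideal.map_span, Set.image_singleton]; rfl)).trans
    (DoubleQuot.quotQuotEquivQuotOfLEₐ O h)).symm.toLinearEquiv

theorem Module.exists_linearEquiv_pi_quotient_span_pow {O : Type*} [CommRing O] [IsDomain O]
    [IsPrincipalIdealRing O] {ϖ : O} (hϖ : Irreducible ϖ) (s : ℕ) (V : Type*) [AddCommGroup V]
    [Module (O ⧸ Ideal.span {ϖ ^ s}) V] [Module.Finite (O ⧸ Ideal.span {ϖ ^ s}) V] :
    ∃ (d : ℕ) (k : Fin d → ℕ), (∀ i, k i ≤ s) ∧ Nonempty (V ≃ₗ[O ⧸ Ideal.span {ϖ ^ s}]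
      ∀ i, (O ⧸ Ideal.span {ϖ ^ s}) ⧸
        Ideal.span {Ideal.Quotient.mk (Ideal.span {ϖ ^ s}) (ϖ ^ k i)}) := by
  let _ : Module O V := Module.compHom V (Ideal.Quotient.mk (Ideal.span {ϖ ^ s}))
  have : IsScalarTower O (O ⧸ Ideal.span {ϖ ^ s}) V := .of_algebraMap_smul fun _ _ ↦ rfl
  have : Module.Finite O V := Module.Finite.trans (O ⧸ Ideal.span {ϖ ^ s}) V
  have hV (v : V) : ϖ ^ s • v = 0 := by
    rw [← algebraMap_smul (O ⧸ Ideal.span {ϖ ^ s}), Ideal.Quotient.algebraMap_eq,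
      Ideal.Quotient.eq_zero_iff_mem.mpr (Ideal.mem_span_singleton_self _), zero_smul]
  obtain ⟨d, k, ⟨e⟩⟩ :=
    Module.torsion_by_prime_power_decomposition hϖ fun v ↦ ⟨⟨ϖ ^ s, s, rfl⟩, hV v⟩
  let e' := e.trans (DirectSum.linearEquivFunOnFintype O _ _)
  have hpow_mem (i : Fin d) : ϖ ^ s ∈ Ideal.span {ϖ ^ k i} := by
    have := Module.mem_annihilator.mpr hV
    rw [e'.annihilator_eq, Module.annihilator_pi] at this
    simpa [Ideal.annihilator_quotient] using Ideal.mem_iInf.mp this i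
  have hks (i : Fin d) : k i ≤ s :=
    (pow_dvd_pow_iff hϖ.ne_zero hϖ.not_isUnit).mp (Ideal.mem_span_singleton.mp (hpow_mem i))
  refine ⟨d, k, hks, ⟨LinearEquiv.extendScalarsOfSurjective Ideal.Quotient.mk_surjective
    (e'.trans (LinearEquiv.piCongrRight fun i ↦ Ideal.quotientSpanSingletonEquivQuotQuot
      (Ideal.span_singleton_le_span_singleton.mpr (pow_dvd_pow ϖ (hks i)))))⟩⟩

theorem stmt4_general (O : Type*) [CommRing O] [IsDomain O] [IsDiscreteValuationRing O]
    (ϖ : O) (hϖ : Irreducible ϖ) (s : ℕ)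
    (V : Type*) [AddCommGroup V] [Module (O ⧸ Ideal.span {ϖ ^ s}) V]
    [Module.Finite (O ⧸ Ideal.span {ϖ ^ s}) V] :
    Function.Bijective (Module.Dual.eval (O ⧸ Ideal.span {ϖ ^ s}) V) := by
  obtain ⟨d, k, hk, ⟨e⟩⟩ := exists_linearEquiv_pi_quotient_span_pow hϖ s V
  have hcyclic (i : Fin d) := isReflexive_quotient_span_pow hϖ.ne_zero (hk i)
  have hV := Module.equiv e.symm
  exact bijective_dual_eval _ _

/-- For `R = O/ϖ^s O` (with `O` a DVR, `ϖ` a uniformizer, `s ≥ 1`) and every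
finitely generated `R`-module `V`, the evaluation map `V → Hom_R(Hom_R(V, R), R)`,
`v ↦ (f ↦ f v)`, is an isomorphism of `R`-modules. -/
theorem stmt4 (O : Type*) [CommRing O] [IsDomain O] [IsDiscreteValuationRing O]
    (ϖ : O) (hϖ : Irreducible ϖ) (s : ℕ) (hs : 1 ≤ s)
    (V : Type*) [AddCommGroup V] [Module (O ⧸ Ideal.span {ϖ ^ s}) V]
    [Module.Finite (O ⧸ Ideal.span {ϖ ^ s}) V] :
    Function.Bijective (Module.Dual.eval (O ⧸ Ideal.span {ϖ ^ s}) V) :=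
  stmt4_general O ϖ hϖ s V
end

section
/- Let O be a discrete valuation ring with uniformizer ϖ, let s ≥ 1 be an integer, let R = O/ϖ^s O, and let Γ be a finite group. If P is a finitely generated projective left R[Γ]-module, then its dual P' = Hom_R(P, R), with the left R[Γ]-module structure determined by (γ·f)(x) = f(γ⁻¹·x), is an injective R[Γ]-module. -/
/-!
For an `R[Γ]`-module `Y` let `Yᵛ = Hom_R(Y, R)` with the contragredient action. An
`R[Γ]`-linear map `Y → P'` and an `R[Γ]`-linear map `P → Yᵛ` are the same datum, a `Γ`-invariant
`R`-bilinear pairing `Y × P → R`. Since `R = O/ϖ^s` is self-injective (every ideal is `(ϖ^k)` with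
`k ≤ s`, and an element killed by `ϖ^(s-k)` is divisible by `ϖ^k`), an injection `X ↪ Y` induces
a surjection `Yᵛ → Xᵛ`. Given `X → P'`, lift the corresponding `P → Xᵛ` through `Yᵛ → Xᵛ` using
the projectivity of `P`, and read the lift back as a map `Y → P'`.
-/

open MonoidAlgebra

theorem Module.Baer.self_of_forall_eq_span_singleton {A : Type*} [CommRing A]
    (h : ∀ I : Ideal A, ∃ t, I = Ideal.span {t} ∧ ∀ c, (∀ a, a * t = 0 → a * c = 0) → t ∣ c) :
    Module.Baer A A := by
  intro I g
  obtain ⟨t, rfl, ht⟩ := h I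
  have htI : t ∈ Ideal.span {t} := Ideal.mem_span_singleton_self t
  obtain ⟨v, hv⟩ := ht (g ⟨t, htI⟩) fun a ha => by
    have : a • (⟨t, htI⟩ : Ideal.span {t}) = 0 := Subtype.ext ha
    rw [← smul_eq_mul, ← map_smul, this, map_zero]
  refine ⟨LinearMap.toSpanSingleton A A v, fun x hx => ?_⟩
  obtain ⟨r, rfl⟩ := Ideal.mem_span_singleton'.1 hx
  rw [show (⟨r * t, hx⟩ : Ideal.span {t}) = r • ⟨t, htI⟩ from rfl, map_smul, hv,
    LinearMap.toSpanSingleton_apply, smul_eq_mul, smul_eq_mul, mul_assoc]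

namespace IsDiscreteValuationRing

variable {O : Type*} [CommRing O] [IsDomain O] [IsDiscreteValuationRing O] {ϖ : O}

theorem exists_eq_span_mk_pow (hϖ : Irreducible ϖ) (s : ℕ) (I : Ideal (O ⧸ Ideal.span {ϖ ^ s})) :
    ∃ k ≤ s, I = Ideal.span {Ideal.Quotient.mk _ (ϖ ^ k)} := by
  have hJs : ϖ ^ s ∈ I.comap (Ideal.Quotient.mk _) := by
    rw [Ideal.mem_comap, Ideal.Quotient.eq_zero_iff_mem.2 (Ideal.mem_span_singleton_self _)]
    exact I.zero_mem
  have hJ : I.comap (Ideal.Quotient.mk _) ≠ ⊥ := fun h =>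
    pow_ne_zero s hϖ.ne_zero (by simpa [h] using hJs)
  obtain ⟨k, hk⟩ := ideal_eq_span_pow_irreducible hJ hϖ
  refine ⟨k, ?_, ?_⟩
  · rw [hk, Ideal.mem_span_singleton] at hJs
    exact (pow_dvd_pow_iff hϖ.ne_zero hϖ.not_isUnit).1 hJs
  · rw [← Ideal.map_comap_of_surjective _ Ideal.Quotient.mk_surjective I, hk, Ideal.map_span,
      Set.image_singleton]

omit [IsDiscreteValuationRing O] in
theorem mk_pow_dvd_of_forall_mul_eq_zero (hϖ : ϖ ≠ 0) {k s : ℕ} (hk : k ≤ s)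
    (c : O ⧸ Ideal.span {ϖ ^ s})
    (hc : ∀ a, a * Ideal.Quotient.mk _ (ϖ ^ k) = 0 → a * c = 0) :
    Ideal.Quotient.mk _ (ϖ ^ k) ∣ c := by
  obtain ⟨b, rfl⟩ := Ideal.Quotient.mk_surjective c
  have hs : ϖ ^ s = ϖ ^ (s - k) * ϖ ^ k := by rw [← pow_add, Nat.sub_add_cancel hk]
  have hb := hc (Ideal.Quotient.mk _ (ϖ ^ (s - k))) <| by
    rw [← map_mul, ← hs, Ideal.Quotient.eq_zero_iff_mem]
    exact Ideal.mem_span_singleton_self _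
  rw [← map_mul, Ideal.Quotient.eq_zero_iff_mem, Ideal.mem_span_singleton, hs,
    mul_dvd_mul_iff_left (pow_ne_zero _ hϖ)] at hb
  obtain ⟨v, rfl⟩ := hb
  exact ⟨Ideal.Quotient.mk _ v, map_mul _ _ _⟩

theorem injective_quotient_span_pow (hϖ : Irreducible ϖ) (s : ℕ) :
    Module.Injective (O ⧸ Ideal.span {ϖ ^ s}) (O ⧸ Ideal.span {ϖ ^ s}) :=
  Module.Baer.injective <| Module.Baer.self_of_forall_eq_span_singleton fun I => by
    obtain ⟨k, hk, rfl⟩ := exists_eq_span_mk_pow hϖ s I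
    exact ⟨_, rfl, mk_pow_dvd_of_forall_mul_eq_zero hϖ.ne_zero hk⟩

end IsDiscreteValuationRing

namespace Representation

variable {R Γ : Type*} [CommRing R] [Group Γ]

section Pairing

variable {V : Type*} [AddCommGroup V] [Module R V] (σ : Representation R Γ V)

lemma asModuleEquiv_single_one_smul (γ : Γ) (v : σ.asModule) :
    σ.asModuleEquiv (single γ (1 : R) • v) = σ γ (σ.asModuleEquiv v) := by
  rw [single_smul, one_smul]
  rfl

lemma asModuleEquiv_dual_single_one_smul (γ : Γ) (φ : σ.dual.asModule) (v : V) :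
    σ.dual.asModuleEquiv (single γ (1 : R) • φ) v = σ.dual.asModuleEquiv φ (σ γ⁻¹ v) := by
  rw [asModuleEquiv_single_one_smul]
  rfl

variable {Y : Type*} [AddCommMonoid Y] [Module R Y] [Module R[Γ] Y] [IsScalarTower R R[Γ] Y]

noncomputable def dualOfInvariantPairing (B : Y →ₗ[R] Module.Dual R V)
    (hB : ∀ (γ : Γ) (y : Y) (v : V), B (single γ (1 : R) • y) (σ γ v) = B y v) :
    Y →ₗ[R[Γ]] σ.dual.asModule :=
  equivariantOfLinearOfComm (σ.dual.asModuleEquiv.symm.toLinearMap ∘ₗ B) fun γ y => by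
    apply σ.dual.asModuleEquiv.injective
    ext v
    rw [asModuleEquiv_single_one_smul]
    change B (single γ (1 : R) • y) v = B y (σ γ⁻¹ v)
    simp [← hB γ y (σ γ⁻¹ v)]

end Pairing

section Contragredient

variable (R Γ) in
noncomputable abbrev contragredient (Y : Type*) [AddCommGroup Y] [Module R Y] [Module R[Γ] Y]
    [IsScalarTower R R[Γ] Y] : Representation R Γ (Module.Dual R Y) :=
  (ofModule' Y).dual

@[simp]
lemma ofModule'_apply {Y : Type*} [AddCommMonoid Y] [Module R Y] [Module R[Γ] Y]
    [IsScalarTower R R[Γ] Y] (γ : Γ) (y : Y) :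
    ofModule' (k := R) Y γ y = single γ (1 : R) • y :=
  rfl

variable {X Y : Type*} [AddCommGroup X] [Module R X] [Module R[Γ] X] [IsScalarTower R R[Γ] X]
  [AddCommGroup Y] [Module R Y] [Module R[Γ] Y] [IsScalarTower R R[Γ] Y]

noncomputable def contragredientMap (u : X →ₗ[R[Γ]] Y) :
    (contragredient R Γ Y).asModule →ₗ[R[Γ]] (contragredient R Γ X).asModule :=
  dualOfInvariantPairing (ofModule' (G := Γ) X)
    (Module.Dual.transpose (R := R) (u.restrictScalars R) ∘ₗ
      (contragredient R Γ Y).asModuleEquiv.toLinearMap)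
    (by
      intro γ φ x
      simp only [LinearMap.comp_apply, LinearEquiv.coe_coe, Module.Dual.transpose_apply,
        asModuleEquiv_single_one_smul, dual_apply, ofModule'_apply, LinearMap.restrictScalars_apply,
        map_smul, smul_smul, single_mul_single, inv_mul_cancel, one_mul, ← one_def, one_smul])

lemma asModuleEquiv_contragredientMap (u : X →ₗ[R[Γ]] Y) (φ : (contragredient R Γ Y).asModule) :
    (contragredient R Γ X).asModuleEquiv (contragredientMap u φ) =
      (contragredient R Γ Y).asModuleEquiv φ ∘ₗ u.restrictScalars R :=
  rfl

lemma contragredientMap_surjective [Module.Injective R R] (u : X →ₗ[R[Γ]] Y)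
    (hu : Function.Injective u) : Function.Surjective (contragredientMap u) := by
  intro φ
  obtain ⟨ψ, hψ⟩ := Module.Injective.extension_property R R X Y (u.restrictScalars R) hu
    ((contragredient R Γ X).asModuleEquiv φ)
  refine ⟨(contragredient R Γ Y).asModuleEquiv.symm ψ,
    (contragredient R Γ X).asModuleEquiv.injective ?_⟩
  rw [asModuleEquiv_contragredientMap]
  simpa using hψ

end Contragredient

section Injective

variable {V : Type*} [AddCommGroup V] [Module R V] (ρ : Representation R Γ V)

theorem exists_extension_dual_asModule [Module.Injective R R] [Module.Projective R[Γ] ρ.asModule]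
    {X Y : Type*} [AddCommGroup X] [Module R X] [Module R[Γ] X] [IsScalarTower R R[Γ] X]
    [AddCommGroup Y] [Module R Y] [Module R[Γ] Y] [IsScalarTower R R[Γ] Y]
    (u : X →ₗ[R[Γ]] Y) (hu : Function.Injective u) (f : X →ₗ[R[Γ]] ρ.dual.asModule) :
    ∃ g : Y →ₗ[R[Γ]] ρ.dual.asModule, g ∘ₗ u = f := by
  let f' : ρ.asModule →ₗ[R[Γ]] (contragredient R Γ X).asModule :=
    dualOfInvariantPairing (ofModule' (G := Γ) X)
      ((ρ.dual.asModuleEquiv.toLinearMap ∘ₗ f.restrictScalars R).flip ∘ₗ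
        ρ.asModuleEquiv.toLinearMap) (by
      intro γ p x
      change ρ.dual.asModuleEquiv (f (single γ (1 : R) • x))
          (ρ.asModuleEquiv (single γ (1 : R) • p)) = ρ.dual.asModuleEquiv (f x) (ρ.asModuleEquiv p)
      rw [map_smul, asModuleEquiv_single_one_smul, asModuleEquiv_single_one_smul, dual_apply,
        Module.Dual.transpose_apply, LinearMap.comp_apply, inv_self_apply])
  obtain ⟨g', hg'⟩ := Module.projective_lifting_property (contragredientMap u) f'
    (contragredientMap_surjective u hu)
  refine ⟨dualOfInvariantPairing ρ (((contragredient R Γ Y).asModuleEquiv.toLinearMap ∘ₗ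
      g'.restrictScalars R ∘ₗ ρ.asModuleEquiv.symm.toLinearMap).flip) (by
    intro γ y p
    change (contragredient R Γ Y).asModuleEquiv (g' (ρ.asModuleEquiv.symm (ρ γ p)))
        (ofModule' Y γ y) = (contragredient R Γ Y).asModuleEquiv (g' (ρ.asModuleEquiv.symm p)) y
    rw [asModuleEquiv_symm_map_rho, of_apply, g'.map_smul, asModuleEquiv_dual_single_one_smul,
      inv_self_apply]), ?_⟩
  ext x
  apply ρ.dual.asModuleEquiv.injective
  ext p
  -- unfolded, this is `g' p (u x) = contragredientMap u (g' p) x = f' p x = f x p`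
  exact congr((contragredient R Γ X).asModuleEquiv ($hg' (ρ.asModuleEquiv.symm p)) x)

theorem dual_asModule_injective [Module.Injective R R] [Module.Projective R[Γ] ρ.asModule] :
    Module.Injective R[Γ] ρ.dual.asModule :=
  Module.Baer.injective fun I g => by
    obtain ⟨g', hg'⟩ := ρ.exists_extension_dual_asModule I.subtype I.injective_subtype g
    exact ⟨g', fun x hx => congr($hg' ⟨x, hx⟩)⟩

end Injective

end Representation

theorem stmt5_general (O : Type) [CommRing O] [IsDomain O] [IsDiscreteValuationRing O]
    (ϖ : O) (hϖ : Irreducible ϖ) (s : ℕ)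
    (Γ : Type) [Group Γ]
    (P : Type) [AddCommGroup P] [Module (O ⧸ Ideal.span {ϖ ^ s}) P]
    (ρ : Representation (O ⧸ Ideal.span {ϖ ^ s}) Γ P)
    (hproj : Module.Projective (MonoidAlgebra (O ⧸ Ideal.span {ϖ ^ s}) Γ) ρ.asModule) :
    Module.Injective (MonoidAlgebra (O ⧸ Ideal.span {ϖ ^ s}) Γ) ρ.dual.asModule :=
  have := IsDiscreteValuationRing.injective_quotient_span_pow hϖ s
  ρ.dual_asModule_injective

/-- Let `O` be a DVR with uniformizer `ϖ`, `s ≥ 1`, `R = O/ϖ^s O`, `Γ` a finite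
group.  A left `R[Γ]`-module is the same thing as an `R`-module `P` together with a
representation `ρ : Γ →* (P →ₗ[R] P)`; the corresponding `R[Γ]`-module is `ρ.asModule`.
If `P` is finitely generated and projective over `R[Γ]`, then its dual `Hom_R(P, R)`,
equipped with the contragredient action `(γ·f)(x) = f(γ⁻¹·x)` (this is `ρ.dual`, whose
associated `R[Γ]`-module is `ρ.dual.asModule`), is an injective `R[Γ]`-module. -/
theorem stmt5 (O : Type) [CommRing O] [IsDomain O] [IsDiscreteValuationRing O]
    (ϖ : O) (hϖ : Irreducible ϖ) (s : ℕ) (hs : 1 ≤ s)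
    (Γ : Type) [Group Γ] [Finite Γ]
    (P : Type) [AddCommGroup P] [Module (O ⧸ Ideal.span {ϖ ^ s}) P]
    (ρ : Representation (O ⧸ Ideal.span {ϖ ^ s}) Γ P)
    (hfin : Module.Finite (MonoidAlgebra (O ⧸ Ideal.span {ϖ ^ s}) Γ) ρ.asModule)
    (hproj : Module.Projective (MonoidAlgebra (O ⧸ Ideal.span {ϖ ^ s}) Γ) ρ.asModule) :
    Module.Injective (MonoidAlgebra (O ⧸ Ideal.span {ϖ ^ s}) Γ) ρ.dual.asModule :=
  stmt5_general O ϖ hϖ s Γ P ρ hproj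
end

section
/- Let O be a discrete valuation ring with uniformizer ϖ, let s ≥ 1 be an integer, let R = O/ϖ^s O, and let Γ be a finite group. Then the group algebra R[Γ] is self-injective: R[Γ] is an injective left module over itself. -/
/-!
Since `O` is a principal ideal domain and `ϖ ^ s ≠ 0`, every ideal of `R = O ⧸ (ϖ ^ s)` is
generated by the image of a divisor `d` of `ϖ ^ s = d * e`, and anything killed by `e` is a
multiple of `d`; so Baer's criterion holds and `R` is self-injective.
For a finite group `Γ`, the group algebra `R[Γ]` is Frobenius over `R`: an `R`-linear form
`ψ : Y → R` on an `R[Γ]`-module lifts to the `R[Γ]`-linear map `y ↦ ∑ g, ψ (g⁻¹ • y) • g`, and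
every `R[Γ]`-linear `f : Y → R[Γ]` is recovered in this way from its coefficient at `1`.
Hence maps from an ideal of `R[Γ]` to `R[Γ]` extend by extending the `R`-linear form
`x ↦ (f x).coeff 1`, using that `R` is self-injective.
-/

theorem Module.Baer.self_of_forall_ideal_eq_span {R : Type*} [CommRing R]
    (h : ∀ I : Ideal R, ∃ x, I = Ideal.span {x} ∧
      ∀ y, (∀ r, r * x = 0 → r * y = 0) → x ∣ y) :
    Module.Baer R R := by
  intro I g
  obtain ⟨x, rfl, hdvd⟩ := h I
  have hx : x ∈ Ideal.span {x} := Ideal.mem_span_singleton_self x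
  obtain ⟨c, hc⟩ : x ∣ g ⟨x, hx⟩ := hdvd _ fun r hr => by
    have : r • (⟨x, hx⟩ : Ideal.span {x}) = 0 := Subtype.ext hr
    rw [← smul_eq_mul, ← map_smul, this, map_zero]
  refine ⟨LinearMap.toSpanSingleton R R c, fun z hz => ?_⟩
  obtain ⟨r, rfl⟩ := Ideal.mem_span_singleton'.mp hz
  have : (⟨r * x, hz⟩ : Ideal.span {x}) = r • ⟨x, hx⟩ := rfl
  rw [this, map_smul, hc, LinearMap.toSpanSingleton_apply, smul_eq_mul, smul_eq_mul, mul_assoc]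

namespace Ideal.Quotient

variable {O : Type*} [CommRing O]

theorem exists_mul_eq_and_eq_span_mk [IsPrincipalIdealRing O] (a : O)
    (I : Ideal (O ⧸ Ideal.span {a})) :
    ∃ d e, a = d * e ∧ I = Ideal.span {Ideal.Quotient.mk _ d} := by
  obtain ⟨d, hd⟩ := (IsPrincipalIdealRing.principal (I.comap (Ideal.Quotient.mk _))).principal
  have ha : a ∈ I.comap (Ideal.Quotient.mk _) := by
    simp [Ideal.Quotient.eq_zero_iff_mem.mpr (Ideal.mem_span_singleton_self a)]
  obtain ⟨e, rfl⟩ := Ideal.mem_span_singleton.mp (hd ▸ ha)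
  refine ⟨d, e, rfl, ?_⟩
  rw [← Ideal.map_comap_of_surjective _ Ideal.Quotient.mk_surjective I, hd]
  exact (Ideal.map_span _ _).trans (by rw [Set.image_singleton])

theorem mk_dvd_of_mk_mul_eq_zero [IsDomain O] {d e : O} (he : e ≠ 0)
    {y : O ⧸ Ideal.span {d * e}} (hy : Ideal.Quotient.mk _ e * y = 0) :
    Ideal.Quotient.mk _ d ∣ y := by
  obtain ⟨y, rfl⟩ := Ideal.Quotient.mk_surjective y
  rw [← map_mul, Ideal.Quotient.eq_zero_iff_mem, Ideal.mem_span_singleton, mul_comm e,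
    mul_dvd_mul_iff_right he] at hy
  exact map_dvd _ hy

theorem baer_self_span_singleton [IsDomain O] [IsPrincipalIdealRing O] {a : O} (ha : a ≠ 0) :
    Module.Baer (O ⧸ Ideal.span {a}) (O ⧸ Ideal.span {a}) := by
  refine Module.Baer.self_of_forall_ideal_eq_span fun I => ?_
  obtain ⟨d, e, rfl, rfl⟩ := exists_mul_eq_and_eq_span_mk a I
  refine ⟨_, rfl, fun y hy => mk_dvd_of_mk_mul_eq_zero (right_ne_zero_of_mul ha) (hy _ ?_)⟩
  rw [← map_mul, mul_comm, Ideal.Quotient.eq_zero_iff_mem]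
  exact Ideal.mem_span_singleton_self _

end Ideal.Quotient

namespace MonoidAlgebra

variable {R Γ : Type*} [CommRing R] [Group Γ]

section Frobenius

variable [Fintype Γ] {Y : Type*} [AddCommGroup Y] [Module (MonoidAlgebra R Γ) Y] [Module R Y]
  [IsScalarTower R (MonoidAlgebra R Γ) Y]

noncomputable def frobeniusLift (ψ : Y →ₗ[R] R) : Y →ₗ[MonoidAlgebra R Γ] MonoidAlgebra R Γ where
  toFun y := ofCoeff (Finsupp.equivFunOnFinite.symm fun g => ψ (single g⁻¹ (1 : R) • y))
  map_add' y z := by ext; simp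
  map_smul' a y := by
    ext g
    induction a using induction_linear with
    | zero => simp
    | add a b ha hb => simp_all [add_smul, add_mul]
    | single h c =>
      have : single g⁻¹ (1 : R) • single h c • y = c • single (g⁻¹ * h) (1 : R) • y := by
        rw [← mul_smul, single_mul_single, one_mul, ← smul_assoc, smul_single', mul_one]
      simp [this]

@[simp]
lemma coeff_frobeniusLift (ψ : Y →ₗ[R] R) (y : Y) (g : Γ) :
    (frobeniusLift ψ y).coeff g = ψ (single g⁻¹ (1 : R) • y) := rfl

lemma frobeniusLift_apply_eq {X : Type*} [AddCommGroup X] [Module (MonoidAlgebra R Γ) X]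
    (i : X →ₗ[MonoidAlgebra R Γ] Y) (f : X →ₗ[MonoidAlgebra R Γ] MonoidAlgebra R Γ)
    {ψ : Y →ₗ[R] R} (hψ : ∀ x, ψ (i x) = (f x).coeff 1) (x : X) :
    frobeniusLift ψ (i x) = f x := by
  ext g
  rw [coeff_frobeniusLift, ← map_smul, hψ, map_smul, smul_eq_mul, coeff_single_mul_apply,
    one_mul, mul_one, inv_inv]

end Frobenius

theorem baer_self [Finite Γ] [Module.Injective R R] :
    Module.Baer (MonoidAlgebra R Γ) (MonoidAlgebra R Γ) := by
  have := Fintype.ofFinite Γ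
  intro I g
  let φ : I →ₗ[R] R := Finsupp.lapply 1 ∘ₗ (coeffLinearEquiv R).toLinearMap ∘ₗ g.restrictScalars R
  obtain ⟨ψ, hψ⟩ := Module.Injective.extension_property R R I (MonoidAlgebra R Γ)
    (I.subtype.restrictScalars R) Subtype.val_injective φ
  exact ⟨frobeniusLift ψ, fun x hx =>
    frobeniusLift_apply_eq I.subtype g (fun x => LinearMap.congr_fun hψ x) ⟨x, hx⟩⟩

theorem injective_self [Finite Γ] [Module.Injective R R] :
    Module.Injective (MonoidAlgebra R Γ) (MonoidAlgebra R Γ) :=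
  baer_self.injective

end MonoidAlgebra

theorem stmt6_general (O : Type*) [CommRing O] [IsDomain O] [IsDiscreteValuationRing O]
    (ϖ : O) (hϖ : Irreducible ϖ) (s : ℕ)
    (Γ : Type*) [Group Γ] [Finite Γ] :
    Module.Injective (MonoidAlgebra (O ⧸ Ideal.span {ϖ ^ s}) Γ)
      (MonoidAlgebra (O ⧸ Ideal.span {ϖ ^ s}) Γ) := by
  have := (Ideal.Quotient.baer_self_span_singleton (pow_ne_zero s hϖ.ne_zero)).injective
  exact MonoidAlgebra.injective_self

/-- For `R = O/ϖ^s O` (with `O` a DVR, `ϖ` a uniformizer, `s ≥ 1`) and a finite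
group `Γ`, the group algebra `R[Γ]` is self-injective: it is an injective left module over
itself. -/
theorem stmt6 (O : Type*) [CommRing O] [IsDomain O] [IsDiscreteValuationRing O]
    (ϖ : O) (hϖ : Irreducible ϖ) (s : ℕ) (hs : 1 ≤ s)
    (Γ : Type*) [Group Γ] [Finite Γ] :
    Module.Injective (MonoidAlgebra (O ⧸ Ideal.span {ϖ ^ s}) Γ)
      (MonoidAlgebra (O ⧸ Ideal.span {ϖ ^ s}) Γ) :=
  stmt6_general O ϖ hϖ s Γ
end

section
/- Let R be a commutative ring, let Γ be a group and let N be a normal subgroup of Γ. If I is an injective left R[Γ]-module, then the submodule of N-invariants I^N = {x ∈ I : n·x = x for all n ∈ N}, regarded as a left R[Γ/N]-module, is an injective R[Γ/N]-module. -/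
/-!
Let `J` be the kernel of `R[Γ] → R[Γ/N]`. An element of `I` is `N`-invariant iff `J` kills it
(`n - 1 ∈ J` for `n ∈ N`, and `R[Γ]` acts on `I^N` through `R[Γ/N]`), so every `R[Γ]`-linear map
from an `R[Γ/N]`-module `Y` into `I` lands in `I^N` and is `R[Γ/N]`-linear there. Hence an extension
problem for `I^N` over `R[Γ/N]` is solved by solving it for `I` over `R[Γ]`.
-/

open Function

section Descent

universe v

variable {A B : Type*} [Ring A] [Ring B] (π : A →+* B) {M P : Type v}
  [AddCommGroup M] [Module A M] [AddCommGroup P] [Module B P] {ι : P →+ M}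

theorem exists_linearMap_comp_eq_of_annihilated (hπ : Surjective π) (hι : Function.Injective ι)
    (hι_smul : ∀ (a : A) (p : P), ι (π a • p) = a • ι p)
    (hrange : ∀ m : M, (∀ a ∈ RingHom.ker π, a • m = 0) → m ∈ ι.range)
    {Y : Type*} [AddCommGroup Y] [Module B Y] (h : Y →+ M)
    (hh : ∀ (a : A) (y : Y), h (π a • y) = a • h y) :
    ∃ H : Y →ₗ[B] P, ∀ y, ι (H y) = h y := by
  have h_mem : ∀ y, h y ∈ ι.range := fun y => hrange _ fun a ha => by
    rw [← hh, RingHom.mem_ker.mp ha, zero_smul, map_zero]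
  choose H hH using h_mem
  refine ⟨{ toFun := H, map_add' := fun y z => hι ?_, map_smul' := fun b y => hι ?_ }, hH⟩
  · rw [map_add, hH, hH, hH, map_add]
  · obtain ⟨a, rfl⟩ := hπ b
    rw [RingHom.id_apply, hι_smul, hH, hH, hh]

theorem Module.Injective.of_annihilated [Module.Injective A M] (hπ : Surjective π)
    (hι : Function.Injective ι) (hι_smul : ∀ (a : A) (p : P), ι (π a • p) = a • ι p)
    (hrange : ∀ m : M, (∀ a ∈ RingHom.ker π, a • m = 0) → m ∈ ι.range) :
    Module.Injective B P := by
  refine ⟨fun X Y _ _ _ _ f hf g => ?_⟩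
  let _ : Module A X := Module.compHom X π
  let _ : Module A Y := Module.compHom Y π
  let fA : X →ₗ[A] Y := { f.toAddMonoidHom with map_smul' := fun a => f.map_smul (π a) }
  let gA : X →ₗ[A] M :=
    { ι.comp g.toAddMonoidHom with map_smul' := fun a x =>
        (congrArg ι (g.map_smul (π a) x)).trans (hι_smul a (g x)) }
  obtain ⟨h, hh⟩ := Module.Injective.out fA hf gA
  obtain ⟨H, hH⟩ :=
    exists_linearMap_comp_eq_of_annihilated π hπ hι hι_smul hrange h.toAddMonoidHom h.map_smul
  exact ⟨H, fun x => hι <| (hH _).trans (hh x)⟩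

end Descent

theorem MonoidAlgebra.mapDomainRingHom_surjective (R : Type*) [Semiring R] {G H : Type*}
    [Monoid G] [Monoid H] {f : G →* H} (hf : Surjective f) :
    Surjective (MonoidAlgebra.mapDomainRingHom R f) := by
  intro b
  induction b using MonoidAlgebra.induction_linear with
  | zero => exact ⟨0, map_zero _⟩
  | add b b' hb hb' =>
    obtain ⟨a, rfl⟩ := hb
    obtain ⟨a', rfl⟩ := hb'
    exact ⟨a + a', map_add _ _ _⟩
  | single h r =>
    obtain ⟨g, rfl⟩ := hf h
    exact ⟨MonoidAlgebra.single g r, by simp⟩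

namespace Representation

variable {R : Type*} [CommRing R] {Γ : Type*} [Group Γ] {N : Subgroup Γ} [N.Normal]
  {I : Type*} [AddCommGroup I] [Module R I] {ρ : Representation R Γ I}

theorem mem_invariants_of_ker_mapDomain_annihilates {x : I}
    (hx : ∀ a ∈ RingHom.ker (MonoidAlgebra.mapDomainRingHom R (QuotientGroup.mk' N)),
      ρ.asAlgebraHom a x = 0) :
    x ∈ invariants (ρ.comp N.subtype) := by
  intro n
  have hker : MonoidAlgebra.single (n : Γ) (1 : R) - 1 ∈
      RingHom.ker (MonoidAlgebra.mapDomainRingHom R (QuotientGroup.mk' N)) := by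
    rw [RingHom.mem_ker, map_sub, map_one, MonoidAlgebra.mapDomainRingHom_apply,
      MonoidAlgebra.mapDomain_single, QuotientGroup.mk'_apply,
      (QuotientGroup.eq_one_iff _).mpr n.2, MonoidAlgebra.one_def, sub_self]
  simpa [sub_eq_zero] using hx _ hker

theorem coe_asAlgebraHom_mapDomain_apply
    (σ : Representation R (Γ ⧸ N) (invariants (ρ.comp N.subtype)))
    (hσ : ∀ (γ : Γ) (x : invariants (ρ.comp N.subtype)),
      (σ (QuotientGroup.mk γ) x : I) = ρ γ x)
    (a : MonoidAlgebra R Γ) (x : invariants (ρ.comp N.subtype)) :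
    (σ.asAlgebraHom (MonoidAlgebra.mapDomainRingHom R (QuotientGroup.mk' N) a) x : I) =
      ρ.asAlgebraHom a x := by
  induction a using MonoidAlgebra.induction_linear with
  | zero => simp
  | add a a' ha ha' => simp only [map_add, LinearMap.add_apply, Submodule.coe_add, ha, ha']
  | single γ r => simp [hσ]

end Representation

/-- Let `R` be a commutative ring, `Γ` a group, `N` a normal subgroup of `Γ`.
A left `R[Γ]`-module is the same thing as an `R`-module `I` together with a representation
`ρ : Γ →* (I →ₗ[R] I)`; the corresponding `R[Γ]`-module is `ρ.asModule`.  Let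
`Representation.invariants (ρ.comp N.subtype)` be the submodule of `N`-invariants `I^N`, and let `σ` be
the representation of `Γ/N` on `I^N` induced by `ρ` (expressed by the compatibility
hypothesis `hσ`).  If `ρ.asModule` is an injective `R[Γ]`-module, then `σ.asModule`
(i.e. `I^N` as an `R[Γ/N]`-module) is an injective `R[Γ/N]`-module. -/
theorem stmt8 (R : Type) [CommRing R] (Γ : Type) [Group Γ] (N : Subgroup Γ) [N.Normal]
    (I : Type) [AddCommGroup I] [Module R I] (ρ : Representation R Γ I)
    (σ : Representation R (Γ ⧸ N) (Representation.invariants (ρ.comp N.subtype)))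
    (hσ : ∀ (γ : Γ) (x : Representation.invariants (ρ.comp N.subtype)),
      (↑(σ (QuotientGroup.mk γ) x) : I) = ρ γ (↑x : I))
    (hinj : Module.Injective (MonoidAlgebra R Γ) ρ.asModule) :
    Module.Injective (MonoidAlgebra R (Γ ⧸ N)) σ.asModule := by
  let ι : σ.asModule →+ ρ.asModule :=
    ρ.asModuleEquiv.symm.toAddMonoidHom.comp <|
      (Representation.invariants (ρ.comp N.subtype)).subtype.toAddMonoidHom.comp
        σ.asModuleEquiv.toAddMonoidHom
  refine Module.Injective.of_annihilated (ι := ι)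
    (MonoidAlgebra.mapDomainRingHom R (QuotientGroup.mk' N))
    (MonoidAlgebra.mapDomainRingHom_surjective R (QuotientGroup.mk'_surjective N))
    (fun x y hxy => σ.asModuleEquiv.injective (Subtype.ext hxy))
    (fun a x => ρ.asModuleEquiv.injective ?_) (fun m hm => ?_)
  · rw [Representation.asModuleEquiv_map_smul]
    exact Representation.coe_asAlgebraHom_mapDomain_apply σ hσ a (σ.asModuleEquiv x)
  have hinv := Representation.mem_invariants_of_ker_mapDomain_annihilates
    fun a ha => congrArg ρ.asModuleEquiv (hm a ha)
  exact ⟨σ.asModuleEquiv.symm ⟨ρ.asModuleEquiv m, hinv⟩, rfl⟩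
end

section
/- Let R be a commutative ring, let G be a group, and let H be a normal subgroup of G of finite index n, with n invertible in R. If M is a left R[G]-module whose restriction to R[H] is a projective R[H]-module, then M is a projective R[G]-module. -/
/-!
Choose a free `R[G]`-module `F` surjecting onto `M` by an `R[G]`-linear map `π`. Projectivity
of `M` over `R[H]` gives an `R[H]`-linear section `σ` of `π`. Since `σ` commutes with `H`, its
conjugate `g σ g⁻¹` depends only on the coset `gH`, and the average
`n⁻¹ ∑_{gH ∈ G/H} g σ g⁻¹` is an `R[G]`-linear section of `π`. So `M` is a direct summand of `F`.
-/

open MonoidAlgebra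
open scoped Ring

noncomputable section

namespace LinearMap

variable {k G V W : Type*} [CommRing k] [Group G]
  [AddCommGroup V] [Module k V] [Module k[G] V] [IsScalarTower k k[G] V]
  [AddCommGroup W] [Module k W] [Module k[G] W] [IsScalarTower k k[G] W]

theorem conjugate_mul (σ : V →ₗ[k] W) (a b : G) :
    σ.conjugate (a * b) = (σ.conjugate a).conjugate b := by
  ext v
  simp only [conjugate_apply, smul_smul, single_mul_single, mul_one, mul_inv_rev]

theorem conjugate_eq_self (σ : V →ₗ[k] W) {g : G}
    (hg : ∀ v, σ (MonoidAlgebra.single g (1 : k) • v) = MonoidAlgebra.single g (1 : k) • σ v) :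
    σ.conjugate g = σ := by
  ext v
  rw [conjugate_apply, hg, smul_smul, single_mul_single, inv_mul_cancel, mul_one, ← one_def,
    one_smul]

theorem conjugate_apply_single_smul (σ : V →ₗ[k] W) (g x : G) (v : V) :
    σ.conjugate g (MonoidAlgebra.single x (1 : k) • v) =
      MonoidAlgebra.single x (1 : k) • σ.conjugate (g * x) v := by
  simp only [conjugate_apply, smul_smul, single_mul_single, mul_one, mul_inv_rev,
    mul_inv_cancel_left]

theorem leftInverse_conjugate {π : W →ₗ[k[G]] V} {σ : V →ₗ[k] W}
    (hπσ : Function.LeftInverse π σ) (g : G) : Function.LeftInverse π (σ.conjugate g) := by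
  intro v
  rw [conjugate_apply, π.map_smul, hπσ, smul_smul, single_mul_single, mul_one, inv_mul_cancel,
    ← one_def, one_smul]

variable (H : Subgroup G) (σ : V →ₗ[k] W)

def cosetConjugate (hσ : ∀ h ∈ H, σ.conjugate h = σ) (q : G ⧸ H) : V →ₗ[k] W :=
  q.liftOn' (fun g => σ.conjugate g⁻¹) fun a b hab => by
    rw [QuotientGroup.leftRel_apply] at hab
    rw [show b⁻¹ = (a⁻¹ * b)⁻¹ * a⁻¹ by group, conjugate_mul, hσ _ (H.inv_mem hab)]

variable {H σ} (hσ : ∀ h ∈ H, σ.conjugate h = σ)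

@[simp]
theorem cosetConjugate_mk (g : G) : cosetConjugate H σ hσ g = σ.conjugate g⁻¹ := rfl

theorem cosetConjugate_apply_single_smul (q : G ⧸ H) (x : G) (v : V) :
    cosetConjugate H σ hσ q (MonoidAlgebra.single x (1 : k) • v) =
      MonoidAlgebra.single x (1 : k) • cosetConjugate H σ hσ (x⁻¹ • q) v := by
  induction q using QuotientGroup.induction_on with
  | H g =>
    rw [MulAction.Quotient.smul_mk, cosetConjugate_mk, cosetConjugate_mk,
      conjugate_apply_single_smul, smul_eq_mul, mul_inv_rev, inv_inv]

variable (H) [Fintype (G ⧸ H)]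

def sumOfCosetConjugates : V →ₗ[k[G]] W :=
  equivariantOfLinearOfComm (∑ q : G ⧸ H, cosetConjugate H σ hσ q) fun x v => by
    simp only [sum_apply, cosetConjugate_apply_single_smul, Finset.smul_sum]
    exact Fintype.sum_bijective _ (MulAction.bijective x⁻¹) _ _ fun _ => rfl

theorem exists_rightInverse_of_conjugate_eq_self (hH : IsUnit (H.index : k))
    (hσ : ∀ h ∈ H, σ.conjugate h = σ) {π : W →ₗ[k[G]] V} (hπσ : Function.LeftInverse π σ) :
    ∃ τ : V →ₗ[k[G]] W, π ∘ₗ τ = .id := by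
  refine ⟨(H.index : k)⁻¹ʳ • sumOfCosetConjugates H hσ, LinearMap.ext fun v => ?_⟩
  have hq (q : G ⧸ H) : π (cosetConjugate H σ hσ q v) = v := by
    induction q using QuotientGroup.induction_on with
    | H g => exact leftInverse_conjugate hπσ g⁻¹ v
  simp only [comp_apply, smul_apply, sumOfCosetConjugates, equivariantOfLinearOfComm_apply,
    sum_apply, map_smul_of_tower, map_sum, hq, Finset.sum_const, Finset.card_univ, id_apply]
  rw [← Nat.cast_smul_eq_nsmul k, smul_smul, Fintype.card_eq_nat_card, ← Subgroup.index_eq_card,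
    Ring.inverse_mul_cancel _ hH, one_smul]

end LinearMap

namespace Representation

variable {k G M : Type*} [CommRing k] [Group G] [AddCommGroup M] [Module k M]
  (ρ : Representation k G M) (H : Subgroup G)

theorem asAlgebraHom_comp_mapDomainAlgHom :
    ρ.asAlgebraHom.comp (mapDomainAlgHom k k H.subtype) = asAlgebraHom (ρ.comp H.subtype) := by
  ext h
  simp

def resAsModuleEquiv : ρ.asModule ≃ₗ[k] asModule (ρ.comp H.subtype) :=
  ρ.asModuleEquiv.trans (asModuleEquiv (ρ.comp H.subtype)).symm

theorem resAsModuleEquiv_mapDomain_smul (a : k[H]) (v : ρ.asModule) :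
    ρ.resAsModuleEquiv H (mapDomainAlgHom k k H.subtype a • v) = a • ρ.resAsModuleEquiv H v :=
  congr($(asAlgebraHom_comp_mapDomainAlgHom ρ H) a v)

theorem linearCombination_mapRange_mapDomain (x : M →₀ k[H]) :
    Finsupp.linearCombination k[G] ρ.asModuleEquiv.symm
        (Finsupp.mapRange.linearMap (mapDomainAlgHom k k H.subtype).toLinearMap x) =
      (ρ.resAsModuleEquiv H).symm
        (Finsupp.linearCombination k[H] (asModuleEquiv (ρ.comp H.subtype)).symm x) := by
  induction x using Finsupp.induction_linear with
  | zero => simp only [map_zero]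
  | add x y hx hy => simp only [map_add, hx, hy]
  | single m a =>
    simp only [Finsupp.mapRange.linearMap_apply, Finsupp.mapRange_single,
      Finsupp.linearCombination_single]
    rw [LinearEquiv.eq_symm_apply, AlgHom.toLinearMap_apply, resAsModuleEquiv_mapDomain_smul]
    simp [resAsModuleEquiv]

theorem exists_leftInverse_linearCombination_conjugate_eq_self
    [Module.Projective k[H] (asModule (ρ.comp H.subtype))] :
    ∃ σ : ρ.asModule →ₗ[k] (M →₀ k[G]), (∀ h ∈ H, σ.conjugate h = σ) ∧
      Function.LeftInverse (Finsupp.linearCombination k[G] ρ.asModuleEquiv.symm) σ := by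
  obtain ⟨s, hs⟩ := LinearMap.exists_rightInverse_of_surjective
    (Finsupp.linearCombination k[H] (asModuleEquiv (ρ.comp H.subtype)).symm)
    (LinearMap.range_eq_top.2 (Finsupp.linearCombination_surjective _ (LinearEquiv.surjective _)))
  refine ⟨Finsupp.mapRange.linearMap (mapDomainAlgHom k k H.subtype).toLinearMap ∘ₗ
    s.restrictScalars k ∘ₗ (ρ.resAsModuleEquiv H).toLinearMap, fun g hg => ?_, fun v => ?_⟩
  · refine LinearMap.conjugate_eq_self _ fun v => ?_
    have hsingle : single g (1 : k) = mapDomainAlgHom k k H.subtype (single ⟨g, hg⟩ 1) := by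
      simp
    simp only [LinearMap.comp_apply, LinearMap.restrictScalars_apply, LinearEquiv.coe_coe]
    rw [hsingle, resAsModuleEquiv_mapDomain_smul, s.map_smul, Finsupp.mapRange.linearMap_apply,
      Finsupp.mapRange_smul' (hf := map_zero _) _ (mapDomainAlgHom k k H.subtype (single ⟨g, hg⟩ 1))
        _ fun x => by simp only [AlgHom.toLinearMap_apply, smul_eq_mul, map_mul]]
    rfl
  · simp only [LinearMap.comp_apply, LinearMap.restrictScalars_apply, LinearEquiv.coe_coe,
      linearCombination_mapRange_mapDomain]
    rw [← LinearMap.comp_apply _ s, hs, LinearMap.id_apply, LinearEquiv.symm_apply_apply]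

end Representation

end

theorem stmt10_general (R : Type*) [CommRing R] (G : Type*) [Group G] (H : Subgroup G)
    (n : ℕ) (hn : 0 < n) (hidx : H.index = n) (hu : IsUnit (n : R))
    (M : Type*) [AddCommGroup M] [Module R M] (ρ : Representation R G M)
    (hres : Module.Projective (MonoidAlgebra R H)
      (Representation.asModule (ρ.comp H.subtype))) :
    Module.Projective (MonoidAlgebra R G) ρ.asModule := by
  have : H.FiniteIndex := ⟨by omega⟩
  have := Fintype.ofFinite (G ⧸ H)
  obtain ⟨σ, hσH, hσ⟩ := ρ.exists_leftInverse_linearCombination_conjugate_eq_self H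
  obtain ⟨τ, hτ⟩ := LinearMap.exists_rightInverse_of_conjugate_eq_self H (by rwa [hidx]) hσH hσ
  exact Module.Projective.of_split τ _ hτ

/-- Let `R` be a commutative ring, `G` a group, and `H` a normal subgroup of
`G` of finite index `n`, with `n` invertible in `R`.  A left `R[G]`-module is the same
thing as an `R`-module `M` together with a representation `ρ : G →* (M →ₗ[R] M)`; the
corresponding `R[G]`-module is `ρ.asModule`, and its restriction to `R[H]` corresponds to
`ρ.comp H.subtype`.  If the restriction of `M` to `R[H]` is projective over `R[H]`, then
`M` is projective over `R[G]`. -/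
theorem stmt10 (R : Type*) [CommRing R] (G : Type*) [Group G] (H : Subgroup G) [H.Normal]
    (n : ℕ) (hn : 0 < n) (hidx : H.index = n) (hu : IsUnit (n : R))
    (M : Type*) [AddCommGroup M] [Module R M] (ρ : Representation R G M)
    (hres : Module.Projective (MonoidAlgebra R H)
      (Representation.asModule (ρ.comp H.subtype))) :
    Module.Projective (MonoidAlgebra R G) ρ.asModule :=
  stmt10_general R G H n hn hidx hu M ρ hres
end

section
/- Let O be a discrete valuation ring with uniformizer ϖ whose residue field has characteristic p > 0, let s ≥ 1 be an integer, let R = O/ϖ^s O, and let Γ be a finite p-group. Then the group algebra R[Γ] is a local ring, in the sense that the non-units of R[Γ] form a two-sided ideal (equivalently, R[Γ] has a unique maximal left ideal). -/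
/-!
Let `ε : R[Γ] → R` be the augmentation and `𝔪` the maximal ideal of the local ring `R`. Then
`ε⁻¹ 𝔪` lies in the Jacobson radical of `R[Γ]`. Indeed, a simple `R[Γ]`-module `M` is finite over
`R`, so by Nakayama `𝔪` acts on it by zero; as `p ∈ 𝔪`, `M` is an `𝔽_p`-vector space on which the
`p`-group `Γ` has a nonzero fixed vector `w`. On `w` every `x` acts by `ε x`, so `ε⁻¹ 𝔪` kills `w`,
hence kills `M = R[Γ] w`. Therefore `R[Γ] → R → R/𝔪` is a local homomorphism onto a field.
The ring `R = O/ϖ^s O` (`s ≥ 1`) is local, with the residue field of `O`.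
-/

open IsLocalRing

theorem IsPGroup.exists_ne_zero_forall_smul_eq {p : ℕ} [Fact p.Prime] {Γ M : Type*} [Group Γ]
    [Finite Γ] (hΓ : IsPGroup p Γ) [AddCommGroup M] [DistribMulAction Γ M]
    [Nontrivial M] (hM : ∀ x : M, p • x = 0) : ∃ w ≠ (0 : M), ∀ g : Γ, g • w = w := by
  obtain ⟨v, hv⟩ := exists_ne (0 : M)
  let U : AddSubgroup M := .closure (Set.range fun g : Γ ↦ g • v)
  have hvU : v ∈ U := AddSubgroup.subset_closure ⟨1, one_smul Γ v⟩
  have smul_mem (g : Γ) {x : M} (hx : x ∈ U) : g • x ∈ U := by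
    induction hx using AddSubgroup.closure_induction with
    | mem _ hx =>
      obtain ⟨h, rfl⟩ := hx
      exact AddSubgroup.subset_closure ⟨g * h, mul_smul g h v⟩
    | zero => simp [U.zero_mem]
    | add _ _ _ _ hx hy => simpa using U.add_mem hx hy
    | neg _ _ hx => simpa using U.neg_mem hx
  let X : SubMulAction Γ M := ⟨U, fun g _ hx ↦ smul_mem g hx⟩
  have : Finite U := AddCommGroup.finite_of_fg_isAddTorsion U fun x ↦
    isOfFinAddOrder_iff_nsmul_eq_zero.mpr ⟨p, (Fact.out : p.Prime).pos, Subtype.ext (hM x)⟩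
  have hcard : p ∣ Nat.card X := by
    have hord : addOrderOf (⟨v, hvU⟩ : U) = p :=
      addOrderOf_eq_prime (Subtype.ext (hM v)) (fun h ↦ hv (congrArg Subtype.val h))
    exact hord ▸ addOrderOf_dvd_natCard _
  obtain ⟨w, hw, hw0⟩ := hΓ.exists_fixed_point_of_prime_dvd_card_of_fixed_point X hcard
    (a := ⟨0, U.zero_mem⟩) fun g ↦ Subtype.ext (smul_zero g)
  exact ⟨w, fun h ↦ hw0 (Subtype.ext h.symm), fun g ↦ congrArg Subtype.val (hw g)⟩

theorem IsSimpleModule.smul_eq_zero_of_mem_maximalIdeal {R A M : Type*} [CommRing R]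
    [IsLocalRing R] [Ring A] [Algebra R A] [AddCommGroup M] [Module A M] [Module R M]
    [IsScalarTower R A M] [IsSimpleModule A M] [Module.Finite R M] {r : R}
    (hr : r ∈ maximalIdeal R) (v : M) : r • v = 0 := by
  by_contra hv
  have : Nontrivial M := IsSimpleModule.nontrivial A M
  have hsurj : Function.Surjective (DistribSMul.toLinearMap A M r) :=
    (LinearMap.bijective_of_ne_zero fun h ↦ hv (LinearMap.congr_fun h v)).surjective
  refine Submodule.top_ne_pointwise_smul_of_mem_jacobson_annihilator (M := M)
    (maximalIdeal_le_jacobson _ hr) (top_unique fun x _ ↦ ?_).symm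
  obtain ⟨y, rfl⟩ := hsurj x
  exact Submodule.smul_mem_pointwise_smul y r ⊤ trivial

theorem isUnit_of_isUnit_mul_of_isUnit_mul {M : Type*} [Monoid M] {x y : M}
    (hxy : IsUnit (x * y)) (hyx : IsUnit (y * x)) : IsUnit x := by
  obtain ⟨u, hu⟩ := hxy
  obtain ⟨v, hv⟩ := hyx
  have hr : x * (y * ↑u⁻¹) = 1 := by rw [← mul_assoc, ← hu, Units.mul_inv]
  have hl : ↑v⁻¹ * y * x = 1 := by rw [mul_assoc, ← hv, Units.inv_mul]
  exact ⟨⟨x, y * ↑u⁻¹, hr, left_inv_eq_right_inv hl hr ▸ hl⟩, rfl⟩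

theorem Ring.isUnit_one_add_of_mem_jacobson {A : Type*} [Ring A] {j : A}
    (hj : j ∈ Ring.jacobson A) : IsUnit (1 + j) := by
  have left_inv (j : A) (hj : j ∈ Ring.jacobson A) : ∃ z, z * (1 + j) = 1 := by
    rw [← Ideal.jacobson_bot] at hj
    obtain ⟨z, hz⟩ := Ideal.exists_mul_add_sub_mem_of_mem_jacobson j hj
    exact ⟨z, by simpa [sub_eq_zero, add_comm j] using hz⟩
  obtain ⟨z, hz⟩ := left_inv j hj
  -- `z = 1 - z * j` lies in `1 + jacobson` as well, and its left inverse must be `1 + j`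
  obtain ⟨u, hu⟩ := left_inv _ (neg_mem (Ideal.mul_mem_left _ z hj))
  rw [show 1 + -(z * j) = z by rw [← hz]; noncomm_ring] at hu
  have hu' : u = 1 + j := by
    calc u = u * (z * (1 + j)) := by rw [hz, mul_one]
      _ = 1 + j := by rw [← mul_assoc, hu, one_mul]
  exact ⟨⟨1 + j, z, hu' ▸ hu, hz⟩, rfl⟩

theorem isLocalHom_of_ker_le_jacobson {A B : Type*} [Ring A] [Ring B] {f : A →+* B}
    (hf : Function.Surjective f) (hker : RingHom.ker f ≤ Ring.jacobson A) : IsLocalHom f := by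
  refine ⟨fun x ⟨u, hu⟩ ↦ ?_⟩
  have isUnit_of_map_eq_one (a : A) (ha : f a = 1) : IsUnit a := by
    simpa using Ring.isUnit_one_add_of_mem_jacobson (hker (show a - 1 ∈ RingHom.ker f by
      simp [RingHom.mem_ker, ha]))
  obtain ⟨y, hy⟩ := hf ↑u⁻¹
  exact isUnit_of_isUnit_mul_of_isUnit_mul (isUnit_of_map_eq_one (x * y) (by simp [hy, ← hu]))
    (isUnit_of_map_eq_one (y * x) (by simp [hy, ← hu]))

namespace MonoidAlgebra

section Augmentation

variable (R Γ : Type*) [CommSemiring R] [Monoid Γ]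

noncomputable def augmentation : MonoidAlgebra R Γ →ₐ[R] R := lift R R Γ 1

variable {R Γ}

@[simp]
theorem augmentation_single (g : Γ) (r : R) : augmentation R Γ (single g r) = r := by
  simp [augmentation, lift_single]

theorem augmentation_surjective : Function.Surjective (augmentation R Γ) :=
  fun r ↦ ⟨single 1 r, augmentation_single 1 r⟩

theorem smul_eq_augmentation_smul {M : Type*} [AddCommMonoid M]
    [Module (MonoidAlgebra R Γ) M] [Module R M] [IsScalarTower R (MonoidAlgebra R Γ) M] {w : M}
    (hw : ∀ g : Γ, of R Γ g • w = w) (x : MonoidAlgebra R Γ) :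
    x • w = augmentation R Γ x • w := by
  induction x using MonoidAlgebra.induction_on with
  | of g => rw [hw g, of_apply, augmentation_single, one_smul]
  | add x y hx hy => rw [add_smul, hx, hy, map_add, add_smul]
  | smul r x hx => rw [smul_assoc, hx, map_smul, smul_eq_mul, mul_smul]

end Augmentation

variable {R Γ : Type*} [CommRing R] [IsLocalRing R] [Group Γ] [Finite Γ]

theorem comap_augmentation_maximalIdeal_le_jacobson {p : ℕ} [Fact p.Prime]
    [CharP (ResidueField R) p] (hΓ : IsPGroup p Γ) :
    (maximalIdeal R).comap (augmentation R Γ) ≤ Ring.jacobson (MonoidAlgebra R Γ) := by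
  rw [Ring.jacobson_eq_sInf_isMaximal]
  refine le_sInf fun m hm x hx ↦ ?_
  set M := MonoidAlgebra R Γ ⧸ m
  have : IsSimpleModule (MonoidAlgebra R Γ) M :=
    isSimpleModule_iff_isCoatom.mpr (Ideal.isMaximal_def.mp hm)
  have : Module.Finite R M := .trans (MonoidAlgebra R Γ) M
  have : Nontrivial M := IsSimpleModule.nontrivial (MonoidAlgebra R Γ) M
  have maximalIdeal_smul (r : R) (hr : r ∈ maximalIdeal R) (v : M) : r • v = 0 :=
    IsSimpleModule.smul_eq_zero_of_mem_maximalIdeal (A := MonoidAlgebra R Γ) hr v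
  have hp (v : M) : p • v = 0 := by
    rw [← Nat.cast_smul_eq_nsmul R]
    exact maximalIdeal_smul _ ((residue_eq_zero_iff _).mp (by simp [CharP.cast_eq_zero])) v
  let := DistribMulAction.compHom M (of R Γ)
  obtain ⟨w, hw0, hw⟩ := hΓ.exists_ne_zero_forall_smul_eq hp
  obtain ⟨a, ha⟩ :=
    IsSimpleModule.toSpanSingleton_surjective (MonoidAlgebra R Γ) hw0 (Submodule.Quotient.mk 1)
  -- `x • [1] = (x * a) • w = ε (x * a) • w`, and `ε (x * a) ∈ 𝔪` since `ε x ∈ 𝔪`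
  rw [← Submodule.Quotient.mk_eq_zero, ← mul_one x, ← smul_eq_mul, Submodule.Quotient.mk_smul,
    ← ha, LinearMap.toSpanSingleton_apply, ← mul_smul, smul_eq_augmentation_smul hw]
  exact maximalIdeal_smul _ (by simpa using Ideal.mul_mem_right _ _ hx) w

theorem isLocalRing_of_isPGroup (p : ℕ) [Fact p.Prime] [CharP (ResidueField R) p]
    (hΓ : IsPGroup p Γ) : IsLocalRing (MonoidAlgebra R Γ) :=
  let φ := (residue R).comp (augmentation R Γ).toRingHom
  have : IsLocalHom φ := isLocalHom_of_ker_le_jacobson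
    (residue_surjective.comp augmentation_surjective)
    fun _ hx ↦ comap_augmentation_maximalIdeal_le_jacobson hΓ
      ((residue_eq_zero_iff _).mp (RingHom.mem_ker.mp hx))
  φ.domain_isLocalRing

end MonoidAlgebra

/-- Let `O` be a DVR with uniformizer `ϖ` whose residue field has
characteristic `p > 0`, let `s ≥ 1`, `R = O/ϖ^s O`, and let `Γ` be a finite `p`-group.
Then the group algebra `R[Γ]` is a local ring (in the sense of possibly noncommutative
rings: the sum of two non-units is a non-unit, equivalently the non-units form a
two-sided ideal / there is a unique maximal left ideal). -/
theorem stmt13 (O : Type*) [CommRing O] [IsDomain O] [IsDiscreteValuationRing O]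
    (ϖ : O) (hϖ : Irreducible ϖ) (s : ℕ) (hs : 1 ≤ s)
    (p : ℕ) [Fact p.Prime] (hchar : CharP (IsLocalRing.ResidueField O) p)
    (Γ : Type*) [Group Γ] [Finite Γ] (hΓ : IsPGroup p Γ) :
    IsLocalRing (MonoidAlgebra (O ⧸ Ideal.span {ϖ ^ s}) Γ) := by
  have : Nontrivial (O ⧸ Ideal.span {ϖ ^ s}) := by
    rw [Ideal.Quotient.nontrivial_iff, Ne, Ideal.span_singleton_eq_top, isUnit_pow_iff (by omega)]
    exact hϖ.not_isUnit
  have : IsLocalRing (O ⧸ Ideal.span {ϖ ^ s}) := .of_surjective' _ Ideal.Quotient.mk_surjective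
  have : IsLocalHom (Ideal.Quotient.mk (Ideal.span {ϖ ^ s})) :=
    .of_surjective _ Ideal.Quotient.mk_surjective
  have : CharP (ResidueField (O ⧸ Ideal.span {ϖ ^ s})) p :=
    ((ResidueField.map (Ideal.Quotient.mk _)).charP_iff_charP p).mp hchar
  exact MonoidAlgebra.isLocalRing_of_isPGroup p hΓ
end
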